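/- arXiv:2205.11312 — 4 statements merged into one kernel-verified Lean document; each statement's English description precedes it below -/
import Mathlib

section
/- Let D be an integral domain with quotient field K, let T be a flat overring of D, and let f ∈ K[X]. Then the T-submodule of K generated by f(D) = {f(d) : d ∈ D} equals the T-submodule of K generated by f(T) = {f(t) : t ∈ T}; that is, f(D)T = f(T)T. -/
open Polynomial

section Preliminaries

variable {K : Type*} [Field K]


/-- The ring `Int(D)` of integer-valued polynomials on a subring `D` of `K`. -/
def intPoly (D : Subring K) : Subring (Polynomial K) where
  carrier := {f : Polynomial K | ∀ d ∈ D, f.eval d ∈ D}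
  mul_mem' := fun {f g} hf hg d hd => by
    simpa [Polynomial.eval_mul] using mul_mem (hf d hd) (hg d hd)
  one_mem' := fun d hd => by simpa using one_mem D
  add_mem' := fun {f g} hf hg d hd => by
    simpa [Polynomial.eval_add] using add_mem (hf d hd) (hg d hd)
  zero_mem' := fun d hd => by simpa using zero_mem D
  neg_mem' := fun {f} hf d hd => by
    simpa [Polynomial.eval_neg] using neg_mem (hf d hd)

@[simp] lemma mem_intPoly {D : Subring K} {f : Polynomial K} :
    f ∈ intPoly D ↔ ∀ d ∈ D, f.eval d ∈ D := Iff.rfl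

lemma smul_poly_eq_C_mul (T : Subring K) (t : ↥T) (p : Polynomial K) :
    t • p = Polynomial.C (t : K) * p := by
  rw [Subring.smul_def, Polynomial.smul_eq_C_mul]

/-- `Int(D)T` : the `T`-submodule of `K[X]` generated by `Int(D)`, which is a subring. -/
def intMul (D T : Subring K) : Subring (Polynomial K) where
  carrier := (Submodule.span ↥T ((intPoly D : Set (Polynomial K))) : Set (Polynomial K))
  zero_mem' := Submodule.zero_mem _
  add_mem' := fun h1 h2 => Submodule.add_mem _ h1 h2
  neg_mem' := fun h => Submodule.neg_mem _ h
  one_mem' := Submodule.subset_span (one_mem (intPoly D))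
  mul_mem' := by
    intro p q hp hq
    simp only [SetLike.mem_coe] at *
    induction hp using Submodule.span_induction with
    | mem x hx =>
      induction hq using Submodule.span_induction with
      | mem y hy => exact Submodule.subset_span (mul_mem hx hy)
      | zero => simpa using Submodule.zero_mem _
      | add y z _ _ hy hz => rw [mul_add]; exact Submodule.add_mem _ hy hz
      | smul t y _ hy =>
        rw [smul_poly_eq_C_mul, ← mul_assoc, mul_comm x (Polynomial.C (t:K)), mul_assoc,
          ← smul_poly_eq_C_mul]
        exact Submodule.smul_mem _ t hy
    | zero => simpa using Submodule.zero_mem _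
    | add y z _ _ hy hz => rw [add_mul]; exact Submodule.add_mem _ hy hz
    | smul t y _ hy =>
      rw [smul_poly_eq_C_mul, mul_assoc, ← smul_poly_eq_C_mul]
      exact Submodule.smul_mem _ t hy

lemma mem_intMul {D T : Subring K} {f : Polynomial K} :
    f ∈ intMul D T ↔ f ∈ Submodule.span ↥T ((intPoly D : Set (Polynomial K))) := Iff.rfl

lemma intPoly_le_intMul (D T : Subring K) : intPoly D ≤ intMul D T :=
  fun _ hf => Submodule.subset_span hf



/-- The localization `D_M` of `D` at a prime ideal `M`, as a subring of `K` (an overring). -/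
def locAt (D : Subring K) (M : Ideal ↥D) [hM : M.IsPrime] : Subring K where
  carrier := {x : K | ∃ d s : ↥D, s ∉ M ∧ (s : K) * x = (d : K)}
  zero_mem' := ⟨0, 1, (Ideal.ne_top_iff_one M).mp hM.ne_top, by simp⟩
  one_mem' := ⟨1, 1, (Ideal.ne_top_iff_one M).mp hM.ne_top, by simp⟩
  add_mem' := by
    rintro x y ⟨d, s, hs, hsx⟩ ⟨e, t, ht, hty⟩
    refine ⟨d * t + e * s, s * t, fun h => ?_, ?_⟩
    · rcases hM.mem_or_mem h with h | h
      exacts [hs h, ht h]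
    · push_cast
      calc (s:K) * (t:K) * (x + y) = (t:K) * ((s:K) * x) + (s:K) * ((t:K) * y) := by ring
      _ = (d:K) * (t:K) + (e:K) * (s:K) := by rw [hsx, hty]; ring
  neg_mem' := by
    rintro x ⟨d, s, hs, hsx⟩
    exact ⟨-d, s, hs, by push_cast; rw [mul_neg, hsx]⟩
  mul_mem' := by
    rintro x y ⟨d, s, hs, hsx⟩ ⟨e, t, ht, hty⟩
    refine ⟨d * e, s * t, fun h => ?_, ?_⟩
    · rcases hM.mem_or_mem h with h | h
      exacts [hs h, ht h]
    · push_cast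
      calc (s:K) * (t:K) * (x * y) = ((s:K)*x) * ((t:K)*y) := by ring
      _ = (d:K) * (e:K) := by rw [hsx, hty]

lemma le_locAt (D : Subring K) (M : Ideal ↥D) [hM : M.IsPrime] : D ≤ locAt D M := by
  intro x hx
  exact ⟨⟨x, hx⟩, 1, (Ideal.ne_top_iff_one M).mp hM.ne_top, by simp⟩

/-- The conductor ideal `(D :_D f(D))` of an integer-valued-polynomial candidate. -/
def condIdeal (D : Subring K) (f : Polynomial K) : Ideal ↥D where
  carrier := {d : ↥D | ∀ c ∈ D, (d : K) * f.eval c ∈ D}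
  zero_mem' := fun c _ => by simpa using zero_mem D
  add_mem' := fun {a b} ha hb c hc => by
    have := add_mem (ha c hc) (hb c hc)
    simpa [add_mul] using this
  smul_mem' := fun r d hd c hc => by
    have := mul_mem r.2 (hd c hc)
    simpa [mul_assoc] using this

/-- The conductor `(T :_T f(D)T)`. -/
def condIdealT (D T : Subring K) (f : Polynomial K) : Ideal ↥T where
  carrier := {t : ↥T | ∀ c ∈ D, (t : K) * f.eval c ∈ T}
  zero_mem' := fun c _ => by simpa using zero_mem T
  add_mem' := fun {a b} ha hb c hc => by
    have := add_mem (ha c hc) (hb c hc)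
    simpa [add_mul] using this
  smul_mem' := fun r t ht c hc => by
    have := mul_mem r.2 (ht c hc)
    simpa [mul_assoc] using this

end Preliminaries

section CG

variable {A B : Type*} [CommRing A] [IsDomain A] [CommRing B] [IsDomain B]

lemma nonZeroDivisors_le_comap_of_injective (f : A →+* B) (hf : Function.Injective f) :
    nonZeroDivisors A ≤ Submonoid.comap f (nonZeroDivisors B) := by
  intro a ha
  simp only [Submonoid.mem_comap]
  refine mem_nonZeroDivisors_of_ne_zero fun h => ?_
  exact nonZeroDivisors.ne_zero ha (hf (by simpa using h))

/-- Extension of fractional ideals along an injective ring homomorphism of domains,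
as a monoid homomorphism. -/
noncomputable def extFrac (f : A →+* B) (hf : Function.Injective f) :
    FractionalIdeal (nonZeroDivisors A) (FractionRing A) →*
      FractionalIdeal (nonZeroDivisors B) (FractionRing B) where
  toFun I := I.extended (FractionRing B) (nonZeroDivisors_le_comap_of_injective f hf)
  map_one' := FractionalIdeal.extended_one _ _
  map_mul' I J := FractionalIdeal.extended_mul _ _ _ _

lemma extFrac_spanSingleton (f : A →+* B) (hf : Function.Injective f) (x : FractionRing A) :
    extFrac f hf (FractionalIdeal.spanSingleton _ x) =
      FractionalIdeal.spanSingleton _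
        (IsLocalization.map (FractionRing B) f
          (nonZeroDivisors_le_comap_of_injective f hf) x) := by
  set g := IsLocalization.map (S := FractionRing A) (FractionRing B) f
    (nonZeroDivisors_le_comap_of_injective f hf) with hg
  apply FractionalIdeal.coeToSubmodule_injective
  show ((FractionalIdeal.spanSingleton (nonZeroDivisors A) x).extended (FractionRing B)
      (nonZeroDivisors_le_comap_of_injective f hf) : Submodule B (FractionRing B)) =
    ((FractionalIdeal.spanSingleton (nonZeroDivisors B) (g x)) : Submodule B (FractionRing B))
  rw [FractionalIdeal.coe_extended_eq_span, FractionalIdeal.coe_spanSingleton]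
  apply le_antisymm
  · rw [Submodule.span_le]
    rintro _ ⟨z, hz, rfl⟩
    rw [SetLike.mem_coe, FractionalIdeal.mem_spanSingleton] at hz
    obtain ⟨a, rfl⟩ := hz
    rw [SetLike.mem_coe, Submodule.mem_span_singleton]
    refine ⟨f a, ?_⟩
    rw [Algebra.smul_def a x, map_mul, IsLocalization.map_eq, Algebra.smul_def]
  · refine Submodule.span_le.mpr (Set.singleton_subset_iff.mpr (Submodule.subset_span ?_))
    exact ⟨x, SetLike.mem_coe.mpr (FractionalIdeal.mem_spanSingleton_self _ x), rfl⟩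

/-- The extension map between class groups induced by an injective ring homomorphism of
integral domains. -/
noncomputable def mapCG (f : A →+* B) (hf : Function.Injective f) :
    ClassGroup A →* ClassGroup B := by
  refine QuotientGroup.lift _ ((ClassGroup.mk (FractionRing B)).comp (Units.map (extFrac f hf))) ?_
  intro x hx
  obtain ⟨u, rfl⟩ := hx
  rw [MonoidHom.mem_ker, MonoidHom.comp_apply, ClassGroup.mk_eq_one_iff]
  have h1 : ((Units.map (extFrac f hf : _ →* _)
        (toPrincipalIdeal A (FractionRing A) u) :
      (FractionalIdeal (nonZeroDivisors B) (FractionRing B))ˣ) :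
      FractionalIdeal (nonZeroDivisors B) (FractionRing B)) =
      extFrac f hf (toPrincipalIdeal A (FractionRing A) u) := rfl
  rw [h1, coe_toPrincipalIdeal, extFrac_spanSingleton]
  rw [FractionalIdeal.coe_spanSingleton]
  exact ⟨⟨_, rfl⟩⟩

end CG

section Homs

variable {K : Type*} [Field K]

lemma subringInclusion_injective {R : Type*} [Ring R] {A B : Subring R} (h : A ≤ B) :
    Function.Injective (Subring.inclusion h) := by
  intro a b hab
  have h2 := congrArg (Subtype.val : ↥B → R) hab
  exact Subtype.ext h2

/-- The constants map `D → Int(D)`. -/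
noncomputable def constHom (D : Subring K) : ↥D →+* ↥(intPoly D) where
  toFun d := ⟨Polynomial.C (d : K), fun c hc => by simpa using d.2⟩
  map_one' := Subtype.ext (by push_cast; simp)
  map_mul' a b := Subtype.ext (by push_cast; simp)
  map_zero' := Subtype.ext (by push_cast; simp)
  map_add' a b := Subtype.ext (by push_cast; simp)

lemma constHom_injective (D : Subring K) : Function.Injective (constHom D) := by
  intro a b hab
  have h2 := congrArg (Subtype.val : {p : Polynomial K // p ∈ _} → Polynomial K) hab
  exact Subtype.ext (Polynomial.C_injective h2)

lemma C_mem_intMul (D T : Subring K) (t : ↥T) : Polynomial.C (t : K) ∈ intMul D T := by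
  have h1 := Submodule.smul_mem (Submodule.span ↥T ((intPoly D : Set (Polynomial K)))) t
    (Submodule.subset_span (one_mem (intPoly D)))
  rwa [smul_poly_eq_C_mul, mul_one] at h1

/-- The constants map `T → Int(D)T`. -/
noncomputable def constHomMul (D T : Subring K) : ↥T →+* ↥(intMul D T) where
  toFun t := ⟨Polynomial.C (t : K), C_mem_intMul D T t⟩
  map_one' := Subtype.ext (by push_cast; simp)
  map_mul' a b := Subtype.ext (by push_cast; simp)
  map_zero' := Subtype.ext (by push_cast; simp)
  map_add' a b := Subtype.ext (by push_cast; simp)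

lemma constHomMul_injective (D T : Subring K) : Function.Injective (constHomMul D T) := by
  intro a b hab
  have h2 := congrArg (Subtype.val : ↥(intMul D T) → Polynomial K) hab
  exact Subtype.ext (Polynomial.C_injective h2)

/-- The extension map `Pic(D) → Pic(T)` for an overring `T` of `D`. -/
noncomputable def picExt {D T : Subring K} (h : D ≤ T) : ClassGroup ↥D →* ClassGroup ↥T :=
  mapCG (Subring.inclusion h) (subringInclusion_injective h)

/-- The extension map `ι_D : Pic(D) → Pic(Int(D))`. -/
noncomputable def iotaPic (D : Subring K) : ClassGroup ↥D →* ClassGroup ↥(intPoly D) :=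
  mapCG (constHom D) (constHom_injective D)

/-- The extension map `ι_{D,T} : Pic(T) → Pic(Int(D)T)`. -/
noncomputable def iotaPicMul (D T : Subring K) : ClassGroup ↥T →* ClassGroup ↥(intMul D T) :=
  mapCG (constHomMul D T) (constHomMul_injective D T)

/-- The extension map `Pic(Int(D)) → Pic(Int(D)T)`. -/
noncomputable def picIntExt (D T : Subring K) :
    ClassGroup ↥(intPoly D) →* ClassGroup ↥(intMul D T) :=
  mapCG (Subring.inclusion (intPoly_le_intMul D T))
    (subringInclusion_injective (intPoly_le_intMul D T))

/-- Transport of class groups along an equality of subrings. -/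
noncomputable def cgCongr {R : Type*} [CommRing R] [IsDomain R] {A B : Subring R} (h : A = B) :
    ClassGroup ↥A →* ClassGroup ↥B :=
  mapCG (RingEquiv.subringCongr h).toRingHom (RingEquiv.subringCongr h).injective

/-- The int-polynomial Picard group `Picpol(D) = Pic(Int(D))/ι_D(Pic(D))`. -/
noncomputable def picpol (D : Subring K) : Type _ :=
  ClassGroup ↥(intPoly D) ⧸ (iotaPic D).range

noncomputable instance (D : Subring K) : CommGroup (picpol D) :=
  QuotientGroup.Quotient.commGroup _

/-- The quotient map `Pic(Int(D)) → Picpol(D)`. -/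
noncomputable def picpolMk (D : Subring K) : ClassGroup ↥(intPoly D) →* picpol D :=
  QuotientGroup.mk' _

/-- The relative int-polynomial Picard group `Picpol(D,T) = Pic(Int(D)T)/ι_{D,T}(Pic(T))`. -/
noncomputable def picpolRel (D T : Subring K) : Type _ :=
  ClassGroup ↥(intMul D T) ⧸ (iotaPicMul D T).range

noncomputable instance (D T : Subring K) : CommGroup (picpolRel D T) :=
  QuotientGroup.Quotient.commGroup _

/-- The quotient map `Pic(Int(D)T) → Picpol(D,T)`. -/
noncomputable def picpolRelMk (D T : Subring K) :
    ClassGroup ↥(intMul D T) →* picpolRel D T :=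
  QuotientGroup.mk' _

/-- `Pic(D,Θ)`: classes of `Pic(D)` that become trivial in every `T ∈ Θ`. -/
noncomputable def picRel (D : Subring K) (Θ : Set (Subring K)) (hle : ∀ T ∈ Θ, D ≤ T) :
    Subgroup (ClassGroup ↥D) where
  carrier := {c | ∀ T, ∀ hT : T ∈ Θ, picExt (hle T hT) c = 1}
  one_mem' := fun T hT => map_one _
  mul_mem' := fun {a b} ha hb T hT => by rw [map_mul, ha T hT, hb T hT, mul_one]
  inv_mem' := fun {a} ha T hT => by rw [map_inv, ha T hT, inv_one]

/-- The subgroup of a product of groups consisting of finitely supported elements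
(the direct sum inside the direct product). -/
def finSupportSubgroup {ι : Type*} (G : ι → Type*) [∀ i, CommGroup (G i)] :
    Subgroup (Π i, G i) where
  carrier := {x | {i | x i ≠ 1}.Finite}
  one_mem' := by simp
  mul_mem' := fun {a b} ha hb => Set.Finite.subset (ha.union hb) (fun i hi => by
    by_contra h
    simp only [Set.mem_union, Set.mem_setOf_eq, not_or, not_not] at h
    exact hi (by simp [h.1, h.2]))
  inv_mem' := fun {a} ha => Set.Finite.subset ha (fun i hi => by
    simp only [Set.mem_setOf_eq, Pi.inv_apply, ne_eq, inv_eq_one] at hi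
    exact hi)

end Homs


/-- `B` is flat as an `A`-module, the module structure being induced by the
inclusion `A ≤ B` of subrings. -/
def SubringFlat {R : Type*} [CommRing R] (A B : Subring R) (h : A ≤ B) : Prop :=
  @Module.Flat ↥A ↥B _ _ (@Algebra.toModule _ _ _ _ ((Subring.inclusion h).toAlgebra))

section Families

variable {K : Type*} [Field K]

/-- A Jaffard family of the integral domain `D`. -/
structure IsJaffardFamily (D : Subring K) (Θ : Set (Subring K)) : Prop where
  le : ∀ T ∈ Θ, D ≤ T
  top : Θ = {(⊤ : Subring K)} ∨ (⊤ : Subring K) ∉ Θ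
  flat : ∀ T, ∀ hT : T ∈ Θ, SubringFlat D T (le T hT)
  complete : ∀ I : Ideal ↥D, ∀ x : ↥D,
    x ∈ I ↔ ∀ T ∈ Θ, (x : K) ∈ Submodule.span ↥T ((fun d : ↥D => (d : K)) '' (I : Set ↥D))
  independent : ∀ T ∈ Θ, ∀ T' ∈ Θ, T ≠ T' → T ⊔ T' = ⊤
  locallyFinite : ∀ x : K, x ∈ D → x ≠ 0 → {T ∈ Θ | ¬ ∃ y ∈ T, x * y = 1}.Finite

/-- A t-Jaffard family of the integral domain `D`. -/
structure IsTJaffardFamily (D : Subring K) (Θ : Set (Subring K)) : Prop where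
  le : ∀ T ∈ Θ, D ≤ T
  top : Θ = {(⊤ : Subring K)} ∨ (⊤ : Subring K) ∉ Θ
  flat : ∀ T, ∀ hT : T ∈ Θ, SubringFlat D T (le T hT)
  independent : ∀ T ∈ Θ, ∀ T' ∈ Θ, T ≠ T' → T ⊔ T' = ⊤
  locallyFinite : ∀ x : K, x ∈ D → x ≠ 0 → {T ∈ Θ | ¬ ∃ y ∈ T, x * y = 1}.Finite
  inter : ∀ x : K, x ∈ D ↔ ∀ T ∈ Θ, x ∈ T

/-- The Zariski topology on the space of subrings of `K`, whose subbasic open sets are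
`B(x) = {T ∣ x ∈ T}`. -/
def zariskiTopOverrings (K : Type*) [Field K] : TopologicalSpace (Subring K) :=
  TopologicalSpace.generateFrom {U | ∃ x : K, U = {T : Subring K | x ∈ T}}

/-- A pre-Jaffard family of the integral domain `D`. -/
structure IsPreJaffardFamily (D : Subring K) (Θ : Set (Subring K)) : Prop where
  le : ∀ T ∈ Θ, D ≤ T
  top : Θ = {(⊤ : Subring K)} ∨ (⊤ : Subring K) ∉ Θ
  flat : ∀ T, ∀ hT : T ∈ Θ, SubringFlat D T (le T hT)
  complete : ∀ I : Ideal ↥D, ∀ x : ↥D,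
    x ∈ I ↔ ∀ T ∈ Θ, (x : K) ∈ Submodule.span ↥T ((fun d : ↥D => (d : K)) '' (I : Set ↥D))
  independent : ∀ T ∈ Θ, ∀ T' ∈ Θ, T ≠ T' → T ⊔ T' = ⊤
  compact : @IsCompact (Subring K) (zariskiTopOverrings K) Θ

/-- A Jaffard overring: a member of some Jaffard family of `D`. -/
def IsJaffardOverring (D T : Subring K) : Prop :=
  ∃ Θ : Set (Subring K), IsJaffardFamily D Θ ∧ T ∈ Θ

/-- A t-Jaffard overring: a member of some t-Jaffard family of `D`. -/
def IsTJaffardOverring (D T : Subring K) : Prop :=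
  ∃ Θ : Set (Subring K), IsTJaffardFamily D Θ ∧ T ∈ Θ

/-- A weak Jaffard family pointed at `Tinf`: a pre-Jaffard family whose set of members
that are not Jaffard overrings of `D` is exactly `{Tinf}`. -/
def IsWeakJaffardFamily (D : Subring K) (Θ : Set (Subring K)) (Tinf : Subring K) : Prop :=
  IsPreJaffardFamily D Θ ∧ {T ∈ Θ | ¬ IsJaffardOverring D T} = {Tinf}

end Families

/-! Only `f(T) ⊆ f(D)T` needs proof. Fix `t ∈ T` and put `g(X) = f(tX)`. If `d` and `td` lie in
`D`, then `g(dX) - dⁿ g(X)` has degree `< n = deg g`, so induction on `n` gives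
`d^N f(t) = d^N g(1) ∈ f(D)T` for some `N`. Flatness of `T` over `D` makes the ideal of
denominators `{d ∈ D | td ∈ D}` extend to the unit ideal of `T`; hence the ideal `(f(D)T : f(t))`
of `T` has radical `T`, so it is `T` and `f(t) ∈ f(D)T`. -/

section Interpolation

variable {A R : Type*} [CommRing A] [CommRing R] [Algebra A R]

theorem Polynomial.exists_pow_smul_eval_one_mem_span (d : A) {Z : Set R}
    (hdZ : algebraMap A R d ∈ Z) (hZ : ∀ z ∈ Z, algebraMap A R d * z ∈ Z) (g : R[X]) :
    ∃ N : ℕ, d ^ N • g.eval 1 ∈ Submodule.span A ((fun x => g.eval x) '' Z) := by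
  set δ := algebraMap A R d
  suffices ∀ n : ℕ, ∀ g : R[X], g.natDegree ≤ n →
      ∃ N : ℕ, d ^ N • g.eval 1 ∈ Submodule.span A ((fun x => g.eval x) '' Z) from
    this _ g le_rfl
  intro n
  induction n with
  | zero =>
    intro g hg
    refine ⟨0, Submodule.subset_span ⟨δ, hdZ, ?_⟩⟩
    rw [eq_C_of_natDegree_le_zero hg]
    simp
  | succ n ih =>
    intro g hg
    set h := g.comp (C δ * X) - C (δ ^ (n + 1)) * g
    have h_eval (x : R) : h.eval x = g.eval (δ * x) - δ ^ (n + 1) * g.eval x := by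
      simp [h]
    have h_natDegree : h.natDegree ≤ n := by
      rw [natDegree_le_iff_coeff_eq_zero]
      intro k hk
      obtain rfl | hk' := (show n + 1 ≤ k from hk).eq_or_lt
      all_goals simp only [h, coeff_sub, comp_C_mul_X_coeff, coeff_C_mul]
      · ring
      · simp [coeff_eq_zero_of_natDegree_lt (hg.trans_lt hk')]
    obtain ⟨N, hN⟩ := ih h h_natDegree
    set M := Submodule.span A ((fun x => g.eval x) '' Z)
    have h_span : Submodule.span A ((fun x => h.eval x) '' Z) ≤ M := by
      rw [Submodule.span_le]
      rintro _ ⟨z, hz, rfl⟩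
      change h.eval z ∈ M
      rw [h_eval, ← map_pow, ← Algebra.smul_def (d ^ (n + 1))]
      exact M.sub_mem (Submodule.subset_span ⟨_, hZ z hz, rfl⟩)
        (M.smul_mem _ (Submodule.subset_span ⟨z, hz, rfl⟩))
    have h_decomp : d ^ (N + (n + 1)) • g.eval 1 = d ^ N • g.eval δ - d ^ N • h.eval 1 := by
      simp only [h_eval, mul_one, Algebra.smul_def, map_pow, δ]
      ring
    refine ⟨N + (n + 1), ?_⟩
    rw [h_decomp]
    exact M.sub_mem (M.smul_mem _ (Submodule.subset_span ⟨δ, hdZ, rfl⟩)) (h_span hN)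

end Interpolation

theorem SubringFlat.span_denominators_eq_top {K : Type*} [Field K] {D T : Subring K}
    [IsFractionRing D K] {hDT : D ≤ T} (hflat : SubringFlat D T hDT) {t : K} (ht : t ∈ T) :
    Ideal.span {s : T | (s : K) ∈ D ∧ t * s ∈ D} = ⊤ := by
  let : Algebra D T := (Subring.inclusion hDT).toAlgebra
  have : Module.Flat D T := hflat
  have smul_coe (r : D) (x : T) : ((r • x : T) : K) = r * x := rfl
  obtain ⟨⟨num, den⟩, hfrac⟩ := IsLocalization.surj (nonZeroDivisors D) t
  have hfrac' : t * den = num := hfrac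
  have hden : ((den : D) : K) ≠ 0 := fun h => nonZeroDivisors.coe_ne_zero den (Subtype.ext h)
  have hrel : ∑ i, ![(den : D), -num] i • ![(⟨t, ht⟩ : T), 1] i = 0 := by
    ext
    simp [Fin.sum_univ_two, smul_coe, ← hfrac', mul_comm]
  have h_triv := Module.Flat.isTrivialRelation_of_sum_smul_eq_zero
    (f := ![(den : D), -num]) (x := ![(⟨t, ht⟩ : T), 1]) hrel
  obtain ⟨k, a, y, hxa, ha⟩ := h_triv
  have h_one : (1 : T) = ∑ j, a 1 j • y j := by simpa using hxa 1
  rw [Ideal.eq_top_iff_one, h_one]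
  refine Ideal.sum_mem _ fun j _ => ?_
  rw [Algebra.smul_def]
  refine Ideal.mul_mem_right _ _ (Ideal.subset_span ⟨(a 1 j).2, ?_⟩)
  have hj : (den : K) * a 0 j = num * a 1 j := by
    have := congrArg (fun r : D => (r : K)) (ha j)
    simp only [Fin.sum_univ_two, Matrix.cons_val_zero, Matrix.cons_val_one,
      Subring.coe_add, Subring.coe_mul, Subring.coe_neg, neg_mul, ZeroMemClass.coe_zero] at this
    linear_combination this
  have : t * a 1 j = a 0 j := mul_left_cancel₀ hden (by rw [hj, ← hfrac']; ring)
  simp [RingHom.algebraMap_toAlgebra, this]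

/-- Let `D` be an integral domain with quotient field `K`, let `T` be a flat
overring of `D`, and let `f ∈ K[X]`. Then the `T`-submodule of `K` generated by
`f(D) = {f(d) : d ∈ D}` equals the `T`-submodule of `K` generated by `f(T) = {f(t) : t ∈ T}`;
that is, `f(D)T = f(T)T`. -/
theorem statement0 {K : Type*} [Field K] (D : Subring K) [IsFractionRing ↥D K]
    (T : Subring K) (hDT : D ≤ T) (hflat : SubringFlat D T hDT) (f : Polynomial K) :
    Submodule.span ↥T ((fun x : K => f.eval x) '' (D : Set K)) =
      Submodule.span ↥T ((fun x : K => f.eval x) '' (T : Set K)) := by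
  refine le_antisymm (Submodule.span_mono (Set.image_mono hDT)) ?_
  rw [Submodule.span_le]
  rintro _ ⟨t, ht, rfl⟩
  set M := Submodule.span T ((fun x : K => f.eval x) '' (D : Set K))
  suffices M.colon {f.eval t} = ⊤ by
    simpa using (Submodule.colon_eq_top_iff_subset _).mp this
  rw [← Ideal.radical_eq_top, eq_top_iff, ← hflat.span_denominators_eq_top ht, Ideal.span_le]
  rintro s ⟨hsD, htsD⟩
  have hZ (z : K) (hz : t * z ∈ D) : (s : K) * z ∈ {x | t * x ∈ D} := by
    simpa [mul_left_comm] using mul_mem hsD hz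
  obtain ⟨N, hN⟩ := (f.comp (C t * X)).exists_pow_smul_eval_one_mem_span s htsD hZ
  have h_span : Submodule.span T ((fun x => (f.comp (C t * X)).eval x) '' {x | t * x ∈ D}) ≤ M :=
    Submodule.span_mono (by rintro _ ⟨z, hz, rfl⟩; exact ⟨t * z, hz, by simp⟩)
  exact ⟨N, Submodule.mem_colon_singleton.mpr (by simpa using h_span hN)⟩
end

section
/- Let D be an integral domain with quotient field K, let T be a flat overring of D, and let f ∈ K[X]. Then f ∈ Int(D)T if and only if (D :_D f(D))T = T, where (D :_D f(D)) := {d ∈ D : d·f(c) ∈ D for all c ∈ D} is an ideal of D and (D :_D f(D))T denotes its extension to T. -/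
open Polynomial

/-!
Membership of `f` in `Int(D)T` is governed by the conductor `(D :_D f(D))`: if it extends to the
unit ideal, write `1 = Σ tᵢ dᵢ` with `dᵢ f ∈ Int(D)`, so `f = Σ tᵢ (dᵢ f)`. Conversely, the
polynomials whose conductor extends to `T` form a `T`-submodule containing `Int(D)`. Closure under
sums is clear since `(D : f(D)) ∩ (D : g(D)) ⊆ (D : (f + g)(D))`; closure under multiplication by
`t ∈ T` uses `(D :_D t)(D : f(D)) ⊆ (D : (t f)(D))` together with `(D :_D t)T = T`, which is
where flatness of `T` enters (Richman).
-/

section Conductor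

variable {K : Type*} [Field K]

def colonIdeal (D : Subring K) (x : K) : Ideal ↥D where
  carrier := {d : ↥D | (d : K) * x ∈ D}
  zero_mem' := by simp
  add_mem' := fun ha hb => by simpa [add_mul] using add_mem ha hb
  smul_mem' := fun r d hd => by simpa [mul_assoc] using mul_mem r.2 hd

lemma mem_colonIdeal {D : Subring K} {x : K} {d : ↥D} :
    d ∈ colonIdeal D x ↔ (d : K) * x ∈ D := Iff.rfl

/-- Writing `t = a / b`, the relation `b • t - a • 1 = 0` in `T` is trivial by the equational
criterion of flatness; this expresses `1` as a `T`-combination of elements `e` with `e t ∈ D`. -/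
theorem map_colonIdeal_eq_top_of_flat (D : Subring K) [IsFractionRing ↥D K] (T : Subring K)
    (hDT : D ≤ T) (hflat : SubringFlat D T hDT) (t : ↥T) :
    Ideal.map (Subring.inclusion hDT) (colonIdeal D t) = ⊤ := by
  let _ : Algebra ↥D ↥T := (Subring.inclusion hDT).toAlgebra
  have : Module.Flat ↥D ↥T := hflat
  have smul_coe (d : ↥D) (y : ↥T) : ((d • y : ↥T) : K) = d * y := rfl
  obtain ⟨a, b, hb, hab⟩ := IsFractionRing.div_surjective (A := ↥D) (t : K)
  replace hab : (a : K) / b = t := hab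
  have hb0 : (b : K) ≠ 0 := by
    exact_mod_cast fun h => nonZeroDivisors.ne_zero hb (Subtype.ext h)
  have hrel : ∑ i, ![b, -a] i • ![t, 1] i = 0 := by
    ext
    simp [Fin.sum_univ_two, smul_coe, ← hab, mul_div_cancel₀ _ hb0]
  obtain ⟨k, c, y, hy, hc⟩ : Module.IsTrivialRelation ![b, -a] ![t, 1] :=
    Module.Flat.isTrivialRelation_of_sum_smul_eq_zero hrel
  rw [Ideal.eq_top_iff_one, show (1 : ↥T) = ∑ j, c 1 j • y j by simpa using hy 1]
  refine sum_mem fun j _ => ?_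
  rw [Algebra.smul_def]
  refine Ideal.mul_mem_right _ _ (Ideal.mem_map_of_mem _ ?_)
  have hcj : (b : K) * c 0 j - a * c 1 j = 0 := by
    simpa [Fin.sum_univ_two, sub_eq_add_neg] using congrArg (Subtype.val : ↥D → K) (hc j)
  have hct : (c 1 j : K) * t = c 0 j := by
    rw [← hab]
    field_simp
    linear_combination -hcj
  rw [mem_colonIdeal, hct]
  exact (c 0 j).2

lemma condIdeal_eq_top_of_mem_intPoly {D : Subring K} {f : Polynomial K}
    (hf : f ∈ intPoly D) : condIdeal D f = ⊤ :=
  (Ideal.eq_top_iff_one _).mpr fun c hc => by simpa using hf c hc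

lemma condIdeal_inf_le_condIdeal_add (D : Subring K) (f g : Polynomial K) :
    condIdeal D f ⊓ condIdeal D g ≤ condIdeal D (f + g) :=
  fun d ⟨hf, hg⟩ c hc => by simpa [mul_add] using add_mem (hf c hc) (hg c hc)

lemma colonIdeal_mul_condIdeal_le (D : Subring K) (x : K) (f : Polynomial K) :
    colonIdeal D x * condIdeal D f ≤ condIdeal D (C x * f) :=
  Ideal.mul_le.mpr fun d hd e he c hc => by
    simpa [mul_mul_mul_comm] using mul_mem (mem_colonIdeal.mp hd) (he c hc)

lemma C_mul_mem_intPoly_of_mem_condIdeal {D : Subring K} {f : Polynomial K} {d : ↥D}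
    (hd : d ∈ condIdeal D f) : C (d : K) * f ∈ intPoly D :=
  fun c hc => by simpa using hd c hc

end Conductor

lemma Ideal.map_eq_top_of_mul_le {R S : Type*} [CommRing R] [CommRing S] (φ : R →+* S)
    {I J L : Ideal R} (hIJ : I * J ≤ L) (hI : I.map φ = ⊤) (hJ : J.map φ = ⊤) :
    L.map φ = ⊤ :=
  eq_top_mono (Ideal.map_mono hIJ) (by rw [Ideal.map_mul, hI, hJ, Ideal.top_mul])

section IntMul

variable {K : Type*} [Field K] (D : Subring K) (T : Subring K) (hDT : D ≤ T)

theorem map_condIdeal_eq_top_of_mem_intMul [IsFractionRing ↥D K] (hflat : SubringFlat D T hDT)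
    {f : Polynomial K} (hf : f ∈ intMul D T) :
    Ideal.map (Subring.inclusion hDT) (condIdeal D f) = ⊤ := by
  induction hf using Submodule.span_induction with
  | mem g hg => rw [condIdeal_eq_top_of_mem_intPoly hg, Ideal.map_top]
  | zero => rw [condIdeal_eq_top_of_mem_intPoly (zero_mem _), Ideal.map_top]
  | add g h _ _ hg hh =>
    exact Ideal.map_eq_top_of_mul_le _
      (Ideal.mul_le_inf.trans (condIdeal_inf_le_condIdeal_add D g h)) hg hh
  | smul t g _ hg =>
    rw [smul_poly_eq_C_mul]
    exact Ideal.map_eq_top_of_mul_le _ (colonIdeal_mul_condIdeal_le D t g)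
      (map_colonIdeal_eq_top_of_flat D T hDT hflat t) hg

theorem mem_intMul_of_map_condIdeal_eq_top {f : Polynomial K}
    (h : Ideal.map (Subring.inclusion hDT) (condIdeal D f) = ⊤) : f ∈ intMul D T := by
  have hle : Ideal.map (Subring.inclusion hDT) (condIdeal D f) ≤
      (Submodule.span ↥T (intPoly D : Set (Polynomial K))).colon {f} :=
    Ideal.map_le_iff_le_comap.mpr fun d hd => Submodule.mem_colon_singleton.mpr <| by
      rw [smul_poly_eq_C_mul]
      exact Submodule.subset_span (C_mul_mem_intPoly_of_mem_condIdeal hd)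
  have h1 := Submodule.mem_colon_singleton.mp (hle (h ▸ Submodule.mem_top : (1 : ↥T) ∈ _))
  rwa [one_smul] at h1

end IntMul

/-- Let `D` be an integral domain with quotient field `K`, let `T` be a flat
overring of `D`, and let `f ∈ K[X]`. Then `f ∈ Int(D)T` if and only if
`(D :_D f(D))T = T`, where `(D :_D f(D)) = {d ∈ D : d·f(c) ∈ D for all c ∈ D}` is an ideal
of `D` and `(D :_D f(D))T` denotes its extension to `T`. -/
theorem statement1 {K : Type*} [Field K] (D : Subring K) [IsFractionRing ↥D K]
    (T : Subring K) (hDT : D ≤ T) (hflat : SubringFlat D T hDT) (f : Polynomial K) :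
    f ∈ intMul D T ↔ Ideal.map (Subring.inclusion hDT) (condIdeal D f) = ⊤ :=
  ⟨map_condIdeal_eq_top_of_mem_intMul D T hDT hflat, mem_intMul_of_map_condIdeal_eq_top D T hDT⟩
end

section
/- Let D be an integral domain with quotient field K and let T be a t-Jaffard overring of D. Then for every nonzero fractional ideal I of D one has (D : I)T = (T : IT), where (D : I) := {x ∈ K : xI ⊆ D}, (D : I)T denotes the T-submodule of K generated by (D : I), IT denotes the T-submodule of K generated by I, and (T : IT) := {x ∈ K : x·IT ⊆ T}. -/
open Polynomial

/-!
Given `x` with `x I ⊆ T`, choose `a ≠ 0` with `a I ⊆ D` and put `u = x / a`. By local finiteness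
`u` lies in all but finitely many members of `Θ`; for each of the finitely many others `S`,
flatness of `T` (Richman's criterion) and independence `T ⊔ S = K` show that
`{d ∈ D | d u ∈ S}` generates the unit ideal of `T`. Hence so does the set of `d ∈ D` with
`d u ∈ S` for every `S ≠ T` in `Θ`, and each such `d` has `x d ∈ (D : I)`, as one checks in every
member of `Θ` using `⋂ Θ = D`. So `x = x · 1 ∈ (D : I) T`.
-/

section TJaffardColon

open Pointwise Submodule

variable {K : Type*} [Field K]

lemma Subring.mem_one_submodule_iff (T : Subring K) {x : K} :
    x ∈ (1 : Submodule T K) ↔ x ∈ T := by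
  rw [Submodule.mem_one]
  exact ⟨fun ⟨y, hy⟩ => hy ▸ y.2, fun hx => ⟨⟨x, hx⟩, rfl⟩⟩

lemma one_mem_span_of_mul_subset {T : Subring K} {A B C : Set K}
    (hA : (1 : K) ∈ span T A) (hB : (1 : K) ∈ span T B) (hABC : A * B ⊆ C) :
    (1 : K) ∈ span T C := by
  have h := mul_mem_mul hA hB
  rw [span_mul_span, one_mul] at h
  exact span_mono hABC h

lemma Subring.exists_mul_eq_of_isFractionRing (D : Subring K) [IsFractionRing D K] (u : K) :
    ∃ p q : D, (q : K) ≠ 0 ∧ u * q = p := by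
  obtain ⟨⟨p, q⟩, hpq⟩ := IsLocalization.surj (nonZeroDivisors D) (S := K) u
  exact ⟨p, q, fun h => nonZeroDivisors.ne_zero q.2 (Subtype.ext h), hpq⟩

/-- One direction of Richman's characterization of flat overrings. -/
theorem one_mem_span_colon_of_flat (D T : Subring K) [IsFractionRing D K] (hDT : D ≤ T)
    (hflat : SubringFlat D T hDT) {t : K} (ht : t ∈ T) :
    (1 : K) ∈ span T {d | d ∈ D ∧ d * t ∈ D} := by
  let _ : Algebra D T := (Subring.inclusion hDT).toAlgebra
  have : Module.Flat D T := hflat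
  obtain ⟨p, q, hq, hpq⟩ := D.exists_mul_eq_of_isFractionRing t
  have hsmul : ∀ (d : D) (τ : T), ((d • τ : T) : K) = d * τ := fun _ _ => rfl
  -- the relation `q • t - p • 1 = 0` in `T` is trivial by the equational criterion
  have hrel : ∑ i, ![q, -p] i • ![(⟨t, ht⟩ : T), 1] i = 0 := by
    apply Subtype.ext
    rw [Fin.sum_univ_two, AddMemClass.coe_add, hsmul, hsmul]
    simp only [Matrix.cons_val_zero, Matrix.cons_val_one, Matrix.cons_val_fin_one]
    push_cast
    linear_combination hpq
  obtain ⟨k, a, y, hy, ha⟩ : Module.IsTrivialRelation ![q, -p] ![(⟨t, ht⟩ : T), 1] :=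
    Module.Flat.isTrivialRelation_of_sum_smul_eq_zero hrel
  have hone : (1 : K) = ∑ j, (y j : K) * (a 1 j : K) := by
    have h := congrArg (fun τ : T => (τ : K)) (hy 1)
    simp only [Matrix.cons_val_one, Matrix.cons_val_fin_one, OneMemClass.coe_one] at h
    rw [h, AddSubmonoidClass.coe_finsetSum]
    exact Finset.sum_congr rfl fun j _ => (hsmul _ _).trans (mul_comm _ _)
  rw [hone]
  refine sum_mem fun j _ => smul_mem _ (y j) (subset_span ⟨(a 1 j).2, ?_⟩)
  have hj := congrArg (fun d : D => (d : K)) (ha j)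
  simp only [Fin.sum_univ_two, Matrix.cons_val_zero, Matrix.cons_val_one,
    Matrix.cons_val_fin_one] at hj
  push_cast at hj
  have key : (a 1 j : K) * t = a 0 j := by
    apply mul_left_cancel₀ hq
    linear_combination (a 1 j : K) * hpq - hj
  exact key ▸ (a 0 j).2

theorem one_mem_span_colon_of_sup_eq_top (D T S : Subring K) [IsFractionRing D K]
    (hDT : D ≤ T) (hDS : D ≤ S) (hflat : SubringFlat D T hDT) (hTS : T ⊔ S = ⊤) (u : K) :
    (1 : K) ∈ span T {d | d ∈ D ∧ d * u ∈ S} := by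
  set P : K → Prop := fun u => (1 : K) ∈ span T {d | d ∈ D ∧ d * u ∈ S}
  have of_mul : ∀ {u v w : K}, P u → P v →
      (∀ d ∈ D, ∀ e ∈ D, d * u ∈ S → e * v ∈ S → d * e * w ∈ S) → P w :=
    fun hu hv h => one_mem_span_of_mul_subset hu hv
      (by rintro _ ⟨d, ⟨hd, hdu⟩, e, ⟨he, hev⟩, rfl⟩; exact ⟨mul_mem hd he, h d hd e he hdu hev⟩)
  have of_mem : ∀ {u : K}, u ∈ S → P u :=
    fun hu => subset_span ⟨one_mem D, by rwa [one_mul]⟩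
  -- `P` holds on `T` and on `S` and is stable under the ring operations, so on `T ⊔ S = K`
  have hu : u ∈ Subring.closure ((T : Set K) ∪ S) := by
    rw [Subring.closure_union, Subring.closure_eq, Subring.closure_eq, hTS]
    exact Subring.mem_top u
  induction hu using Subring.closure_induction with
  | mem z hz =>
    rcases hz with hz | hz
    · refine span_mono (fun d hd => ?_) (one_mem_span_colon_of_flat D T hDT hflat hz)
      exact ⟨hd.1, hDS hd.2⟩
    · exact of_mem hz
  | zero => exact of_mem (zero_mem S)
  | one => exact of_mem (one_mem S)
  | add x y _ _ hx hy =>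
    refine of_mul hx hy fun d hd e he hdx hey => ?_
    rw [show d * e * (x + y) = e * (d * x) + d * (e * y) by ring]
    exact add_mem (mul_mem (hDS he) hdx) (mul_mem (hDS hd) hey)
  | neg x _ hx =>
    refine span_mono (fun d hd => ?_) hx
    exact ⟨hd.1, by simpa using neg_mem hd.2⟩
  | mul x y _ _ hx hy =>
    refine of_mul hx hy fun d _ e _ hdx hey => ?_
    rw [show d * e * (x * y) = d * x * (e * y) by ring]
    exact mul_mem hdx hey

lemma span_colon_subset_colon_span {D T : Subring K} (hDT : D ≤ T) (I : Set K) :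
    (span T {x | ∀ y ∈ I, x * y ∈ D} : Set K) ⊆ {x | ∀ y ∈ span T I, x * y ∈ T} := by
  intro x hx y hy
  have h := mul_mem_mul hx hy
  rw [span_mul_span] at h
  refine (Subring.mem_one_submodule_iff T).mp (span_le.mpr ?_ h)
  rintro _ ⟨x, hx, y, hy, rfl⟩
  exact (Subring.mem_one_submodule_iff T).mpr (hDT (hx y hy))

namespace IsTJaffardFamily

variable {D T : Subring K} {Θ : Set (Subring K)} [IsFractionRing D K]

theorem finite_setOf_notMem (hΘ : IsTJaffardFamily D Θ) (u : K) :
    {S ∈ Θ | u ∉ S}.Finite := by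
  obtain ⟨p, q, hq, hpq⟩ := D.exists_mul_eq_of_isFractionRing u
  refine (hΘ.locallyFinite q q.2 hq).subset fun S ⟨hS, huS⟩ => ⟨hS, ?_⟩
  rintro ⟨y, hy, hqy⟩
  refine huS ?_
  rw [show u = p * y by rw [← hpq, mul_assoc, hqy, mul_one]]
  exact mul_mem (hΘ.le S hS (p : D).2) hy

theorem one_mem_span_colon_finset (hΘ : IsTJaffardFamily D Θ) (hT : T ∈ Θ) (u : K)
    (F : Finset (Subring K)) (hF : ∀ S ∈ F, S ∈ Θ ∧ S ≠ T) :
    (1 : K) ∈ span T {d | d ∈ D ∧ ∀ S ∈ F, d * u ∈ S} := by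
  classical
  induction F using Finset.induction_on with
  | empty => exact subset_span ⟨one_mem D, by simp⟩
  | insert S₀ F _ ih =>
    obtain ⟨hS₀, hS₀T⟩ := hF S₀ (Finset.mem_insert_self S₀ F)
    have h₀ := one_mem_span_colon_of_sup_eq_top D T S₀ (hΘ.le T hT) (hΘ.le S₀ hS₀)
      (hΘ.flat T hT) (hΘ.independent T hT S₀ hS₀ (Ne.symm hS₀T)) u
    refine one_mem_span_of_mul_subset h₀ (ih fun S hS => hF S (Finset.mem_insert_of_mem hS)) ?_
    rintro _ ⟨d, ⟨hd, hdu⟩, e, ⟨he, heu⟩, rfl⟩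
    refine ⟨mul_mem hd he, fun S hS => ?_⟩
    rcases Finset.mem_insert.mp hS with rfl | hS
    · rw [mul_right_comm]
      exact mul_mem hdu (hΘ.le S hS₀ he)
    · rw [mul_assoc]
      exact mul_mem (hΘ.le S (hF S (Finset.mem_insert_of_mem hS)).1 hd) (heu S hS)

theorem one_mem_span_colon (hΘ : IsTJaffardFamily D Θ) (hT : T ∈ Θ) (u : K) :
    (1 : K) ∈ span T {d | d ∈ D ∧ ∀ S ∈ Θ, S ≠ T → d * u ∈ S} := by
  classical
  set F := ((hΘ.finite_setOf_notMem u).toFinset).erase T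
  have hF : ∀ S ∈ F, S ∈ Θ ∧ S ≠ T := fun S hS => by
    rw [Finset.mem_erase, Set.Finite.mem_toFinset] at hS
    exact ⟨hS.2.1, hS.1⟩
  refine span_mono ?_ (hΘ.one_mem_span_colon_finset hT u F hF)
  refine fun d ⟨hd, hdF⟩ => ⟨hd, fun S hS hST => ?_⟩
  by_cases huS : u ∈ S
  · exact mul_mem (hΘ.le S hS hd) huS
  · exact hdF S (Finset.mem_erase.mpr ⟨hST, (Set.Finite.mem_toFinset _).mpr ⟨hS, huS⟩⟩)

theorem mem_span_colon (hΘ : IsTJaffardFamily D Θ) (hT : T ∈ Θ) {I : Set K}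
    (hfrac : ∃ a : K, a ≠ 0 ∧ ∀ y ∈ I, a * y ∈ D) {x : K} (hx : ∀ y ∈ I, x * y ∈ T) :
    x ∈ span T {x | ∀ y ∈ I, x * y ∈ D} := by
  obtain ⟨a, ha, haI⟩ := hfrac
  have h := mul_mem_mul (subset_span (Set.mem_singleton x)) (hΘ.one_mem_span_colon hT (x * a⁻¹))
  rw [span_mul_span, mul_one] at h
  refine span_mono ?_ h
  rintro _ ⟨_, hx', d, ⟨hd, hdu⟩, rfl⟩ y hy
  rw [Set.mem_singleton_iff.mp hx']
  refine (hΘ.inter _).mpr fun S hS => ?_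
  by_cases hST : S = T
  · subst hST
    rw [mul_right_comm, mul_comm]
    exact mul_mem (hΘ.le S hS hd) (hx y hy)
  · rw [show x * d * y = d * (x * a⁻¹) * (a * y) by field_simp]
    exact mul_mem (hdu S hS hST) (hΘ.le S hS (haI y hy))

end IsTJaffardFamily

end TJaffardColon

theorem statement4_general {K : Type*} [Field K] (D : Subring K) [IsFractionRing ↥D K]
    (T : Subring K) (hT : IsTJaffardOverring D T)
    (I : Submodule ↥D K) (hfrac : ∃ x : K, x ≠ 0 ∧ ∀ y ∈ I, x * y ∈ D) :
    (Submodule.span ↥T {x : K | ∀ y ∈ I, x * y ∈ D} : Set K) =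
      {x : K | ∀ y ∈ Submodule.span ↥T (I : Set K), x * y ∈ T} := by
  obtain ⟨Θ, hΘ, hTΘ⟩ := hT
  refine (span_colon_subset_colon_span (hΘ.le T hTΘ) I).antisymm fun x hx => ?_
  exact hΘ.mem_span_colon hTΘ hfrac fun y hy => hx y (Submodule.subset_span hy)

/-- Let `D` be an integral domain with quotient field `K` and let `T` be a
t-Jaffard overring of `D`. Then for every nonzero fractional ideal `I` of `D` one has
`(D : I)T = (T : IT)`. -/
theorem statement4 {K : Type*} [Field K] (D : Subring K) [IsFractionRing ↥D K]
    (T : Subring K) (hT : IsTJaffardOverring D T)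
    (I : Submodule ↥D K) (hI : I ≠ ⊥) (hfrac : ∃ x : K, x ≠ 0 ∧ ∀ y ∈ I, x * y ∈ D) :
    (Submodule.span ↥T {x : K | ∀ y ∈ I, x * y ∈ D} : Set K) =
      {x : K | ∀ y ∈ Submodule.span ↥T (I : Set K), x * y ∈ T} :=
  statement4_general D T hT I hfrac
end

section
/- Let D be a Noetherian integral domain with quotient field K and let T be a flat overring of D. Then Int(D)T = Int(T). -/
open Polynomial

/-!
Write `P = M ∩ D` for a maximal ideal `M` of `T`. For `t = a / b ∈ T`, the equational criterion
of flatness applied to the relation `b • t - a • 1 = 0` shows that the ideal `(D :_D t)` extends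
to the unit ideal of `T`, so it is not contained in `P` and `T ⊆ D_P`; conversely an element of
every `D_{M ∩ D}` lies in `T`.

Since `D` is Noetherian, `Int(D) ⊆ Int(D_P)` for every prime `P`. If `D / P` is infinite,
Lagrange interpolation at nodes of `D` with pairwise distinct residues writes `f(t)` as an
element of `D_P`. If `P` is maximal, write `c f = g ∈ D[X]`: every `t ∈ D_P` is congruent to
some `d ∈ D` modulo `P^n D_P`, so `g(t) ∈ c D_P + P^n D_P` for all `n`, and Krull's intersection
theorem in the Noetherian local ring `D_P` gives `g(t) ∈ c D_P`. Together with `T ⊆ D_P` this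
gives `Int(D) ⊆ Int(T)`, hence `Int(D)T ⊆ Int(T)`.

Conversely, for `f ∈ Int(T)` the `D`-module spanned by `f(D)` lies in `c⁻¹ D`, so it is
finitely generated; as it also lies in `T ⊆ D_P`, some `s ∈ D \ P` satisfies `s f ∈ Int(D)`. These `s`
lie outside every maximal ideal of `T`, so `f ∈ Int(D)T`.
-/

section LocalGlobal

variable {R M : Type*} [CommRing R] [AddCommGroup M] [Module R M]

theorem Submodule.mem_of_forall_isMaximal_exists_smul_mem {N : Submodule R M} {x : M}
    (h : ∀ m : Ideal R, m.IsMaximal → ∃ r ∉ m, r • x ∈ N) : x ∈ N := by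
  refine N.mem_of_span_top_of_smul_mem {r | r • x ∈ N} ?_ x fun r => r.2
  by_contra hne
  obtain ⟨m, hm, hle⟩ := Ideal.exists_le_maximal _ hne
  obtain ⟨r, hrm, hr⟩ := h m hm
  exact hrm (hle (Ideal.subset_span hr))

theorem Ideal.mem_of_forall_mem_sup_pow [IsNoetherianRing R] [IsLocalRing R] {I J : Ideal R}
    (hI : I ≠ ⊤) {x : R} (hx : ∀ n : ℕ, x ∈ J ⊔ I ^ n) : x ∈ J := by
  have krull : (⨅ n : ℕ, I ^ n • ⊤ : Submodule R (R ⧸ J)) = ⊥ :=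
    I.iInf_pow_smul_eq_bot_of_isLocalRing hI
  rw [← Ideal.Quotient.eq_zero_iff_mem, ← Submodule.mem_bot R, ← krull, Submodule.mem_iInf]
  intro n
  simpa only [Ideal.smul_top_eq_map, Ideal.Quotient.algebraMap_eq,
    Submodule.restrictScalars_mem, Ideal.mem_quotient_iff_mem_sup, sup_comm] using hx n

theorem Polynomial.eval_mem_of_forall_sub_mem_pow [IsNoetherianRing R] [IsLocalRing R]
    {J : Ideal R} (g : Polynomial R) (r : R)
    (h : ∀ n : ℕ, ∃ a, r - a ∈ IsLocalRing.maximalIdeal R ^ n ∧ g.eval a ∈ J) :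
    g.eval r ∈ J := by
  refine Ideal.mem_of_forall_mem_sup_pow (IsLocalRing.maximalIdeal.isMaximal R).ne_top fun n => ?_
  obtain ⟨a, hra, hga⟩ := h n
  obtain ⟨q, hq⟩ := sub_dvd_eval_sub r a g
  rw [← sub_add_cancel (g.eval r) (g.eval a), hq, add_comm]
  exact Submodule.add_mem_sup hga (Ideal.mul_mem_right q _ hra)

end LocalGlobal

open Polynomial in
theorem Subring.eval_mem_of_interpolation {K ι : Type*} [Field K] [DecidableEq ι] {A : Subring K}
    {f : K[X]} {s : Finset ι} {v : ι → K} (hvs : Set.InjOn v s) (hdeg : f.degree < s.card)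
    (hv : ∀ i ∈ s, v i ∈ A) (hfv : ∀ i ∈ s, f.eval (v i) ∈ A)
    (hinv : ∀ i ∈ s, ∀ j ∈ s, i ≠ j → (v i - v j)⁻¹ ∈ A) {t : K} (ht : t ∈ A) :
    f.eval t ∈ A := by
  rw [Lagrange.eq_interpolate hvs hdeg, Lagrange.interpolate_apply, eval_finsetSum]
  refine sum_mem fun i hi => ?_
  rw [eval_mul, eval_C, Lagrange.basis, eval_prod]
  refine mul_mem (hfv i hi) (prod_mem fun j hj => ?_)
  obtain ⟨hji, hj⟩ := Finset.mem_erase.mp hj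
  rw [Lagrange.basisDivisor, eval_mul, eval_C, eval_sub, eval_X, eval_C]
  exact mul_mem (hinv i hi j hj (Ne.symm hji)) (sub_mem ht (hv j hj))

theorem intMul_le_intPoly {K : Type*} [Field K] {D T : Subring K} (h : intPoly D ≤ intPoly T) :
    intMul D T ≤ intPoly T := by
  intro f hf
  induction hf using Submodule.span_induction with
  | mem g hg => exact h hg
  | zero => exact zero_mem _
  | add g g' _ _ hg hg' => exact add_mem hg hg'
  | smul r g _ hg =>
    rw [smul_poly_eq_C_mul]
    exact mul_mem (fun t _ => by simp) hg

section Localization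

open Polynomial

variable {K : Type*} [Field K] {D : Subring K}

theorem coe_ne_zero_of_mem_nonZeroDivisors {s : D} (hs : s ∈ nonZeroDivisors D) : (s : K) ≠ 0 :=
  ZeroMemClass.coe_eq_zero.not.mpr (nonZeroDivisors.ne_zero hs)

theorem coe_ne_zero_of_notMem {P : Ideal D} {s : D} (hs : s ∉ P) : (s : K) ≠ 0 :=
  ZeroMemClass.coe_eq_zero.not.mpr fun h => hs (h ▸ P.zero_mem)

variable {P : Ideal D} [P.IsPrime]

theorem inv_mem_locAt {s : D} (hs : s ∉ P) : (s : K)⁻¹ ∈ locAt D P :=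
  ⟨1, s, hs, by simp [coe_ne_zero_of_notMem hs]⟩

noncomputable instance : Algebra D (locAt D P) := (Subring.inclusion (le_locAt D P)).toAlgebra

instance isLocalization_locAt : IsLocalization.AtPrime (locAt D P) P := by
  rw [IsLocalization.AtPrime, isLocalization_iff]
  refine ⟨fun s => ?_, ?_, fun h => ⟨1, by simpa using Subring.inclusion_injective _ h⟩⟩
  · refine isUnit_iff_exists_inv.mpr ⟨⟨_, inv_mem_locAt s.2⟩, Subtype.ext ?_⟩
    exact mul_inv_cancel₀ (coe_ne_zero_of_notMem (P := P) s.2)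
  · rintro ⟨z, d, s, hs, h⟩
    exact ⟨(d, ⟨s, hs⟩), Subtype.ext (by rw [mul_comm]; exact h)⟩

instance [IsNoetherianRing D] : IsNoetherianRing (locAt D P) :=
  IsLocalization.isNoetherianRing P.primeCompl _ ‹_›

instance : IsLocalRing (locAt D P) := IsLocalization.AtPrime.isLocalRing _ P

theorem eval_mem_locAt_of_infinite [Infinite (D ⧸ P)] {f : K[X]} (hf : f ∈ intPoly D)
    {t : K} (ht : t ∈ locAt D P) : f.eval t ∈ locAt D P := by
  classical
  let e : Fin (f.natDegree + 1) ↪ D ⧸ P := Fin.valEmbedding.trans (Infinite.natEmbedding _)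
  let v : Fin (f.natDegree + 1) → D :=
    fun i => Function.surjInv Ideal.Quotient.mk_surjective (e i)
  have hsub : ∀ i j, i ≠ j → v i - v j ∉ P := fun i j hij h => hij <| e.injective <| by
    rw [← Function.surjInv_eq Ideal.Quotient.mk_surjective (e i),
      ← Function.surjInv_eq Ideal.Quotient.mk_surjective (e j)]
    exact Ideal.Quotient.eq.mpr h
  refine Subring.eval_mem_of_interpolation (s := Finset.univ) (v := fun i => (v i : K)) ?_ ?_
    (fun i _ => le_locAt D P (v i).2) (fun i _ => le_locAt D P (hf _ (v i).2))
    (fun i _ j _ hij => by simpa using inv_mem_locAt (hsub i j hij)) ht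
  · intro i _ j _ h
    by_contra hij
    exact hsub i j hij (by rw [Subtype.ext h, sub_self]; exact P.zero_mem)
  · rw [Finset.card_univ, Fintype.card_fin]
    exact degree_le_natDegree.trans_lt (by exact_mod_cast Nat.lt_succ_self _)

theorem exists_sub_eq_mul_of_mem_locAt [P.IsMaximal] {t : K} (ht : t ∈ locAt D P) (n : ℕ) :
    ∃ d : D, ∃ i ∈ P ^ n, t - d = i * t := by
  obtain ⟨a, s, hs, hst⟩ := ht
  obtain ⟨y, i, hi, hys⟩ := Ideal.IsMaximal.exists_inv_pow P hs n
  refine ⟨y * a, i, hi, ?_⟩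
  have hys : (y : K) * s + i = 1 := by exact_mod_cast congrArg Subtype.val hys
  push_cast
  rw [← hst]
  linear_combination (-t) * hys

theorem eval_mem_locAt_of_isMaximal [IsFractionRing D K] [IsNoetherianRing D] [P.IsMaximal]
    {f : K[X]} (hf : f ∈ intPoly D) {t : K} (ht : t ∈ locAt D P) : f.eval t ∈ locAt D P := by
  obtain ⟨c, hc0, hc⟩ := IsLocalization.integerNormalization_spec (nonZeroDivisors D) f
  set g := (IsLocalization.integerNormalization (nonZeroDivisors D) f).map
    (algebraMap D (locAt D P))
  have hg : ∀ y : locAt D P, ((g.eval y : locAt D P) : K) = c * f.eval (y : K) := by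
    intro y
    have hφ : (locAt D P).subtype.comp (algebraMap D (locAt D P)) = algebraMap D K := rfl
    rw [← Subring.coe_subtype, ← eval_map_apply, Polynomial.map_map, hφ, hc, eval_smul,
      Algebra.smul_def]
    rfl
  have key : g.eval ⟨t, ht⟩ ∈ Ideal.span {algebraMap D (locAt D P) c} := by
    refine g.eval_mem_of_forall_sub_mem_pow _ fun n => ?_
    obtain ⟨d, i, hi, hdi⟩ := exists_sub_eq_mul_of_mem_locAt ht n
    refine ⟨algebraMap D _ d, ?_, Ideal.mem_span_singleton'.mpr
      ⟨algebraMap D _ ⟨f.eval d, hf d d.2⟩, Subtype.ext ?_⟩⟩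
    · have hdi : (⟨t, ht⟩ : locAt D P) - algebraMap D _ d = algebraMap D _ i * ⟨t, ht⟩ :=
        Subtype.ext hdi
      rw [hdi, ← IsLocalization.AtPrime.map_eq_maximalIdeal P, ← Ideal.map_pow]
      exact Ideal.mul_mem_right _ _ (Ideal.mem_map_of_mem _ hi)
    · rw [hg, mul_comm]
      rfl
  obtain ⟨r, hr⟩ := Ideal.mem_span_singleton'.mp key
  have hrc : (c : K) * r = c * f.eval t := by
    rw [← hg ⟨t, ht⟩, ← hr, mul_comm]
    rfl
  rw [← mul_left_cancel₀ (coe_ne_zero_of_mem_nonZeroDivisors hc0) hrc]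
  exact r.2

theorem intPoly_le_intPoly_locAt [IsFractionRing D K] [IsNoetherianRing D] :
    intPoly D ≤ intPoly (locAt D P) := by
  intro f hf t ht
  by_cases hmax : P.IsMaximal
  · exact eval_mem_locAt_of_isMaximal hf ht
  · have : Infinite (D ⧸ P) := by
      rw [← not_finite_iff_infinite]
      intro _
      exact hmax (Ideal.Quotient.maximal_of_isField P (Finite.isField_of_domain _))
    exact eval_mem_locAt_of_infinite hf ht

theorem fg_span_range_eval [IsFractionRing D K] [IsNoetherianRing D] (f : K[X]) :
    (Submodule.span D (Set.range fun d : D => f.eval (d : K))).FG := by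
  obtain ⟨c, hc0, hc⟩ := IsLocalization.integerNormalization_spec (nonZeroDivisors D) f
  refine (Submodule.fg_span_singleton (c : K)⁻¹).of_le (Submodule.span_le.mpr ?_)
  rintro _ ⟨d, rfl⟩
  refine Submodule.mem_span_singleton.mpr
    ⟨(IsLocalization.integerNormalization (nonZeroDivisors D) f).eval d, ?_⟩
  have hcf := eval_map_apply (algebraMap D K) d
    (p := IsLocalization.integerNormalization (nonZeroDivisors D) f)
  rw [hc, eval_smul, Algebra.smul_def] at hcf
  rw [Algebra.smul_def, ← hcf]
  field_simp [coe_ne_zero_of_mem_nonZeroDivisors hc0]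
  rfl

theorem exists_mul_mem_of_fg_span {S : Set K} (hS : S ⊆ locAt D P)
    (hfg : (Submodule.span D S).FG) :
    ∃ s ∉ P, ∀ x ∈ Submodule.span D S, (s : K) * x ∈ D := by
  classical
  obtain ⟨G, hGS, hspan⟩ := (Submodule.fg_span_iff_fg_span_finset_subset S).mp hfg
  rw [hspan]
  clear hspan hfg
  induction G using Finset.induction_on with
  | empty =>
    refine ⟨1, (Ideal.ne_top_iff_one P).mp Ideal.IsPrime.ne_top', fun x hx => ?_⟩
    simp only [Finset.coe_empty, Submodule.span_empty, Submodule.mem_bot] at hx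
    simp [hx]
  | insert y G _ ih =>
    obtain ⟨s, hs, hsG⟩ := ih ((Finset.coe_subset.mpr (Finset.subset_insert y G)).trans hGS)
    obtain ⟨a, r, hr, hry⟩ := hS (hGS (Finset.mem_insert_self y G))
    refine ⟨r * s, Ideal.IsPrime.mul_notMem ‹_› hr hs, fun x hx => ?_⟩
    rw [Finset.coe_insert, Submodule.mem_span_insert] at hx
    obtain ⟨e, z, hz, rfl⟩ := hx
    have hmem := add_mem (mul_mem (mul_mem s.2 e.2) a.2) (mul_mem r.2 (hsG z hz))
    convert hmem using 1
    rw [Subring.smul_def, ← hry]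
    push_cast
    ring

theorem exists_C_mul_mem_intPoly [IsFractionRing D K] [IsNoetherianRing D] {f : K[X]}
    (hf : ∀ d ∈ D, f.eval d ∈ locAt D P) : ∃ s ∉ P, C (s : K) * f ∈ intPoly D := by
  obtain ⟨s, hs, hsf⟩ :=
    exists_mul_mem_of_fg_span (Set.range_subset_iff.mpr fun d : D => hf d d.2)
      (fg_span_range_eval f)
  exact ⟨s, hs, fun d hd => by simpa using hsf _ (Submodule.subset_span ⟨⟨d, hd⟩, rfl⟩)⟩

end Localization

section FlatOverring

variable {K : Type*} [Field K] {D T : Subring K}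

theorem exists_sum_mul_eq_one_of_flat [IsFractionRing D K] (hDT : D ≤ T)
    (hflat : SubringFlat D T hDT) {t : K} (ht : t ∈ T) :
    ∃ (k : ℕ) (d : Fin k → D) (y : Fin k → T),
      (∀ j, (d j : K) * t ∈ D) ∧ ∑ j, (d j : K) * y j = 1 := by
  let := (Subring.inclusion hDT).toAlgebra
  have : Module.Flat D T := hflat
  obtain ⟨⟨a, b⟩, hab⟩ := IsLocalization.surj (nonZeroDivisors D) t
  replace hab : t * (b : D) = a := hab
  have hb : ((b : D) : K) ≠ 0 := coe_ne_zero_of_mem_nonZeroDivisors b.2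
  have hrel : ∑ i, ![(b : D), -a] i • ![(⟨t, ht⟩ : T), 1] i = 0 := by
    apply Subtype.ext
    simp only [Fin.sum_univ_two, Algebra.smul_def]
    show ((b : D) : K) * t + -(a : K) * 1 = 0
    linear_combination hab
  obtain ⟨k, A, y, hy, hA⟩ :=
    @Module.Flat.isTrivialRelation_of_sum_smul_eq_zero D T _ _ _ this (Fin 2) _ _ _ hrel
  refine ⟨k, A 1, y, fun j => ?_, ?_⟩
  · have h : ((b : D) : K) * A 0 j = a * A 1 j := by
      have h := congrArg Subtype.val (hA j)
      simp only [Fin.sum_univ_two] at h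
      push_cast at h
      linear_combination h
    rw [mul_left_cancel₀ hb (by linear_combination (A 1 j : K) * hab - h :
      ((b : D) : K) * (A 1 j * t) = b * A 0 j)]
    exact (A 0 j).2
  · have h := congrArg Subtype.val (hy 1)
    simp only [Algebra.smul_def] at h
    push_cast at h
    exact h.symm

theorem mem_locAt_comap_of_flat [IsFractionRing D K] (hDT : D ≤ T) (hflat : SubringFlat D T hDT)
    (M : Ideal T) [M.IsMaximal] {t : K} (ht : t ∈ T) :
    t ∈ locAt D (M.comap (Subring.inclusion hDT)) := by
  obtain ⟨k, d, y, hdt, hsum⟩ := exists_sum_mul_eq_one_of_flat hDT hflat ht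
  obtain ⟨j, hj⟩ : ∃ j, Subring.inclusion hDT (d j) ∉ M := by
    by_contra! h
    refine ‹M.IsMaximal›.ne_top ((Ideal.eq_top_iff_one M).mpr ?_)
    convert Ideal.sum_mem M fun j _ => M.mul_mem_right (y j) (h j)
    exact Subtype.ext (by simpa using hsum.symm)
  exact ⟨⟨_, hdt j⟩, d j, hj, rfl⟩

theorem mem_of_forall_mem_locAt (hDT : D ≤ T) {x : K}
    (h : ∀ (M : Ideal T) [M.IsMaximal], x ∈ locAt D (M.comap (Subring.inclusion hDT))) :
    x ∈ T := by
  suffices x ∈ (1 : Submodule T K) by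
    obtain ⟨y, rfl⟩ := Submodule.mem_one.mp this
    exact y.2
  refine Submodule.mem_of_forall_isMaximal_exists_smul_mem fun M _ => ?_
  obtain ⟨a, s, hs, hsx⟩ := h M
  exact ⟨Subring.inclusion hDT s, hs,
    Submodule.mem_one.mpr ⟨Subring.inclusion hDT a, hsx.symm⟩⟩

theorem intPoly_le_intPoly_of_flat [IsFractionRing D K] [IsNoetherianRing D] (hDT : D ≤ T)
    (hflat : SubringFlat D T hDT) : intPoly D ≤ intPoly T :=
  fun _ hf t ht => mem_of_forall_mem_locAt hDT fun M _ =>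
    intPoly_le_intPoly_locAt hf t (mem_locAt_comap_of_flat hDT hflat M ht)

theorem intPoly_le_intMul_of_flat [IsFractionRing D K] [IsNoetherianRing D] (hDT : D ≤ T)
    (hflat : SubringFlat D T hDT) : intPoly T ≤ intMul D T := by
  intro f hf
  refine mem_intMul.mpr (Submodule.mem_of_forall_isMaximal_exists_smul_mem fun M _ => ?_)
  obtain ⟨s, hs, hsf⟩ := exists_C_mul_mem_intPoly (P := M.comap (Subring.inclusion hDT))
    fun d hd => mem_locAt_comap_of_flat hDT hflat M (hf d (hDT hd))
  exact ⟨Subring.inclusion hDT s, hs, by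
    rw [smul_poly_eq_C_mul]; exact Submodule.subset_span hsf⟩

end FlatOverring

/-- Let `D` be a Noetherian integral domain with quotient field `K` and let `T`
be a flat overring of `D`. Then `Int(D)T = Int(T)`. -/
theorem statement6 {K : Type*} [Field K] (D : Subring K) [IsFractionRing ↥D K]
    [IsNoetherianRing ↥D] (T : Subring K) (hDT : D ≤ T) (hflat : SubringFlat D T hDT) :
    intMul D T = intPoly T :=
  le_antisymm (intMul_le_intPoly (intPoly_le_intPoly_of_flat hDT hflat))
    (intPoly_le_intMul_of_flat hDT hflat)
end
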